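/- arXiv:math/0305136 — 2 statements merged into one kernel-verified Lean document; each statement's English description precedes it below -/
import Mathlib

section
/- In a Hopf algebroid, an element Υ ∈ A satisfies Υa = Υ s_R(π_R(a)) for all a ∈ A if and only if it satisfies Υa = Υ t_R(π_R(a)) for all a ∈ A. -/
universe u

/-- A Böhm–Szlachányi Hopf algebroid with total ring `A`, left bialgebroid structure over `L`
and right bialgebroid structure over `R`.  The coproducts `γ_L(a) = ∑ᵢ c1 a i ⊗ c2 a i`
(`i < nL a`) and `γ_R(a) = ∑ᵢ d1 a i ⊗ d2 a i` (`i < nR a`) are recorded by chosen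
representatives; all identities involving them are stated by evaluation against arbitrary
balanced biadditive maps, which is exactly equality in the corresponding tensor product
over the (non-commutative) base ring.  Multiplication in `A` is written in the same order
as in the paper. -/
structure HopfAlgebroidData (A L R : Type u) [Ring A] [Ring L] [Ring R] where
  sL : L → A
  tL : L → A
  sR : R → A
  tR : R → A
  sL_one : sL 1 = 1
  sL_add : ∀ x y, sL (x + y) = sL x + sL y
  sL_mul : ∀ x y, sL (x * y) = sL x * sL y
  tL_one : tL 1 = 1
  tL_add : ∀ x y, tL (x + y) = tL x + tL y
  tL_mul : ∀ x y, tL (x * y) = tL y * tL x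
  sR_one : sR 1 = 1
  sR_add : ∀ x y, sR (x + y) = sR x + sR y
  sR_mul : ∀ x y, sR (x * y) = sR x * sR y
  tR_one : tR 1 = 1
  tR_add : ∀ x y, tR (x + y) = tR x + tR y
  tR_mul : ∀ x y, tR (x * y) = tR y * tR x
  commL : ∀ l l', sL l * tL l' = tL l' * sL l
  commR : ∀ r r', sR r * tR r' = tR r' * sR r
  /-- number of terms of `γ_L a` -/
  nL : A → ℕ
  c1 : A → ℕ → A
  c2 : A → ℕ → A
  πL : A → L
  /-- number of terms of `γ_R a` -/
  nR : A → ℕ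
  d1 : A → ℕ → A
  d2 : A → ℕ → A
  πR : A → R
  S : A → A
  Sinv : A → A
  -- `γ_L` is additive, a bimodule map `_L A _L → A_L ⊗_L {}_L A`
  -- (with `l·a·l' = sL l * tL l' * a`, balanced maps satisfy `f (tL l * u) v = f u (sL l * v)`)
  comulL_add : ∀ {M : Type u} [AddCommGroup M] (f : A → A → M),
    (∀ u u' v, f (u + u') v = f u v + f u' v) →
    (∀ u v v', f u (v + v') = f u v + f u v') →
    (∀ l u v, f (tL l * u) v = f u (sL l * v)) →
    ∀ a b, (∑ i ∈ Finset.range (nL (a + b)), f (c1 (a + b) i) (c2 (a + b) i)) =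
      (∑ i ∈ Finset.range (nL a), f (c1 a i) (c2 a i)) +
      (∑ i ∈ Finset.range (nL b), f (c1 b i) (c2 b i))
  comulL_bimod : ∀ {M : Type u} [AddCommGroup M] (f : A → A → M),
    (∀ u u' v, f (u + u') v = f u v + f u' v) →
    (∀ u v v', f u (v + v') = f u v + f u v') →
    (∀ l u v, f (tL l * u) v = f u (sL l * v)) →
    ∀ (l l' : L) a,
      (∑ i ∈ Finset.range (nL (sL l * tL l' * a)),
        f (c1 (sL l * tL l' * a) i) (c2 (sL l * tL l' * a) i)) =
      (∑ i ∈ Finset.range (nL a), f (sL l * c1 a i) (tL l' * c2 a i))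
  comulL_coassoc : ∀ {M : Type u} [AddCommGroup M] (g : A → A → A → M),
    (∀ u u' v w, g (u + u') v w = g u v w + g u' v w) →
    (∀ u v v' w, g u (v + v') w = g u v w + g u v' w) →
    (∀ u v w w', g u v (w + w') = g u v w + g u v w') →
    (∀ l u v w, g (tL l * u) v w = g u (sL l * v) w) →
    (∀ l u v w, g u (tL l * v) w = g u v (sL l * w)) →
    ∀ a, (∑ i ∈ Finset.range (nL a), ∑ j ∈ Finset.range (nL (c1 a i)),
        g (c1 (c1 a i) j) (c2 (c1 a i) j) (c2 a i)) =
      (∑ i ∈ Finset.range (nL a), ∑ j ∈ Finset.range (nL (c2 a i)),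
        g (c1 a i) (c1 (c2 a i) j) (c2 (c2 a i) j))
  comulL_takeuchi : ∀ {M : Type u} [AddCommGroup M] (f : A → A → M),
    (∀ u u' v, f (u + u') v = f u v + f u' v) →
    (∀ u v v', f u (v + v') = f u v + f u v') →
    (∀ l u v, f (tL l * u) v = f u (sL l * v)) →
    ∀ (l : L) a, (∑ i ∈ Finset.range (nL a), f (c1 a i * tL l) (c2 a i)) =
      (∑ i ∈ Finset.range (nL a), f (c1 a i) (c2 a i * sL l))
  comulL_one : ∀ {M : Type u} [AddCommGroup M] (f : A → A → M),
    (∀ u u' v, f (u + u') v = f u v + f u' v) →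
    (∀ u v v', f u (v + v') = f u v + f u v') →
    (∀ l u v, f (tL l * u) v = f u (sL l * v)) →
    (∑ i ∈ Finset.range (nL 1), f (c1 1 i) (c2 1 i)) = f 1 1
  comulL_mul : ∀ {M : Type u} [AddCommGroup M] (f : A → A → M),
    (∀ u u' v, f (u + u') v = f u v + f u' v) →
    (∀ u v v', f u (v + v') = f u v + f u v') →
    (∀ l u v, f (tL l * u) v = f u (sL l * v)) →
    ∀ a b, (∑ i ∈ Finset.range (nL (a * b)), f (c1 (a * b) i) (c2 (a * b) i)) =
      (∑ i ∈ Finset.range (nL a), ∑ j ∈ Finset.range (nL b),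
        f (c1 a i * c1 b j) (c2 a i * c2 b j))
  πL_one : πL 1 = 1
  πL_add : ∀ a b, πL (a + b) = πL a + πL b
  counitL_left : ∀ a, (∑ i ∈ Finset.range (nL a), sL (πL (c1 a i)) * c2 a i) = a
  counitL_right : ∀ a, (∑ i ∈ Finset.range (nL a), tL (πL (c2 a i)) * c1 a i) = a
  πL_runit : ∀ a b, πL (a * sL (πL b)) = πL (a * b)
  πL_runit' : ∀ a b, πL (a * tL (πL b)) = πL (a * b)
  -- right bialgebroid data (`r·a·r' = a * sR r' * tR r`, balanced maps satisfy
  -- `f (u * sR r) v = f u (v * tR r)`)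
  comulR_add : ∀ {M : Type u} [AddCommGroup M] (f : A → A → M),
    (∀ u u' v, f (u + u') v = f u v + f u' v) →
    (∀ u v v', f u (v + v') = f u v + f u v') →
    (∀ r u v, f (u * sR r) v = f u (v * tR r)) →
    ∀ a b, (∑ i ∈ Finset.range (nR (a + b)), f (d1 (a + b) i) (d2 (a + b) i)) =
      (∑ i ∈ Finset.range (nR a), f (d1 a i) (d2 a i)) +
      (∑ i ∈ Finset.range (nR b), f (d1 b i) (d2 b i))
  comulR_bimod : ∀ {M : Type u} [AddCommGroup M] (f : A → A → M),
    (∀ u u' v, f (u + u') v = f u v + f u' v) →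
    (∀ u v v', f u (v + v') = f u v + f u v') →
    (∀ r u v, f (u * sR r) v = f u (v * tR r)) →
    ∀ (r r' : R) a,
      (∑ i ∈ Finset.range (nR (a * sR r' * tR r)),
        f (d1 (a * sR r' * tR r) i) (d2 (a * sR r' * tR r) i)) =
      (∑ i ∈ Finset.range (nR a), f (d1 a i * tR r) (d2 a i * sR r'))
  comulR_coassoc : ∀ {M : Type u} [AddCommGroup M] (g : A → A → A → M),
    (∀ u u' v w, g (u + u') v w = g u v w + g u' v w) →
    (∀ u v v' w, g u (v + v') w = g u v w + g u v' w) →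
    (∀ u v w w', g u v (w + w') = g u v w + g u v w') →
    (∀ r u v w, g (u * sR r) v w = g u (v * tR r) w) →
    (∀ r u v w, g u (v * sR r) w = g u v (w * tR r)) →
    ∀ a, (∑ i ∈ Finset.range (nR a), ∑ j ∈ Finset.range (nR (d1 a i)),
        g (d1 (d1 a i) j) (d2 (d1 a i) j) (d2 a i)) =
      (∑ i ∈ Finset.range (nR a), ∑ j ∈ Finset.range (nR (d2 a i)),
        g (d1 a i) (d1 (d2 a i) j) (d2 (d2 a i) j))
  comulR_takeuchi : ∀ {M : Type u} [AddCommGroup M] (f : A → A → M),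
    (∀ u u' v, f (u + u') v = f u v + f u' v) →
    (∀ u v v', f u (v + v') = f u v + f u v') →
    (∀ r u v, f (u * sR r) v = f u (v * tR r)) →
    ∀ (r : R) a, (∑ i ∈ Finset.range (nR a), f (sR r * d1 a i) (d2 a i)) =
      (∑ i ∈ Finset.range (nR a), f (d1 a i) (tR r * d2 a i))
  comulR_one : ∀ {M : Type u} [AddCommGroup M] (f : A → A → M),
    (∀ u u' v, f (u + u') v = f u v + f u' v) →
    (∀ u v v', f u (v + v') = f u v + f u v') →
    (∀ r u v, f (u * sR r) v = f u (v * tR r)) →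
    (∑ i ∈ Finset.range (nR 1), f (d1 1 i) (d2 1 i)) = f 1 1
  comulR_mul : ∀ {M : Type u} [AddCommGroup M] (f : A → A → M),
    (∀ u u' v, f (u + u') v = f u v + f u' v) →
    (∀ u v v', f u (v + v') = f u v + f u v') →
    (∀ r u v, f (u * sR r) v = f u (v * tR r)) →
    ∀ a b, (∑ i ∈ Finset.range (nR (a * b)), f (d1 (a * b) i) (d2 (a * b) i)) =
      (∑ i ∈ Finset.range (nR a), ∑ j ∈ Finset.range (nR b),
        f (d1 a i * d1 b j) (d2 a i * d2 b j))
  πR_one : πR 1 = 1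
  πR_add : ∀ a b, πR (a + b) = πR a + πR b
  counitR_left : ∀ a, (∑ i ∈ Finset.range (nR a), d1 a i * sR (πR (d2 a i))) = a
  counitR_right : ∀ a, (∑ i ∈ Finset.range (nR a), d2 a i * tR (πR (d1 a i))) = a
  πR_lunit : ∀ a b, πR (sR (πR a) * b) = πR (a * b)
  πR_lunit' : ∀ a b, πR (tR (πR a) * b) = πR (a * b)
  -- Hopf algebroid axioms
  range_sL_tR : Set.range sL = Set.range tR
  range_tL_sR : Set.range tL = Set.range sR
  mixed₁ : ∀ {M : Type u} [AddCommGroup M] (g : A → A → A → M),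
    (∀ u u' v w, g (u + u') v w = g u v w + g u' v w) →
    (∀ u v v' w, g u (v + v') w = g u v w + g u v' w) →
    (∀ u v w w', g u v (w + w') = g u v w + g u v w') →
    (∀ l u v w, g (tL l * u) v w = g u (sL l * v) w) →
    (∀ r u v w, g u (v * sR r) w = g u v (w * tR r)) →
    ∀ a, (∑ i ∈ Finset.range (nR a), ∑ j ∈ Finset.range (nL (d1 a i)),
        g (c1 (d1 a i) j) (c2 (d1 a i) j) (d2 a i)) =
      (∑ i ∈ Finset.range (nL a), ∑ j ∈ Finset.range (nR (c2 a i)),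
        g (c1 a i) (d1 (c2 a i) j) (d2 (c2 a i) j))
  mixed₂ : ∀ {M : Type u} [AddCommGroup M] (g : A → A → A → M),
    (∀ u u' v w, g (u + u') v w = g u v w + g u' v w) →
    (∀ u v v' w, g u (v + v') w = g u v w + g u v' w) →
    (∀ u v w w', g u v (w + w') = g u v w + g u v w') →
    (∀ r u v w, g (u * sR r) v w = g u (v * tR r) w) →
    (∀ l u v w, g u (tL l * v) w = g u v (sL l * w)) →
    ∀ a, (∑ i ∈ Finset.range (nL a), ∑ j ∈ Finset.range (nR (c1 a i)),
        g (d1 (c1 a i) j) (d2 (c1 a i) j) (c2 a i)) =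
      (∑ i ∈ Finset.range (nR a), ∑ j ∈ Finset.range (nL (d2 a i)),
        g (d1 a i) (c1 (d2 a i) j) (c2 (d2 a i) j))
  S_add : ∀ a b, S (a + b) = S a + S b
  S_leftinv : ∀ a, Sinv (S a) = a
  S_rightinv : ∀ a, S (Sinv a) = a
  S_twistL : ∀ l l' a, S (tL l * a * tL l') = sL l' * S a * sL l
  S_twistR : ∀ r r' a, S (tR r' * a * tR r) = sR r * S a * sR r'
  antipode_L : ∀ a, (∑ i ∈ Finset.range (nL a), S (c1 a i) * c2 a i) = sR (πR a)
  antipode_R : ∀ a, (∑ i ∈ Finset.range (nR a), d1 a i * S (d2 a i)) = sL (πL a)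


/-! Left counitality of `π_R` gives `π_R (t_R (π_R a)) = π_R a`, so the `s_R`-property yields
`Υ a = Υ s_R(π_R a) = Υ s_R(π_R (t_R (π_R a))) = Υ t_R(π_R a)`; the converse is symmetric. -/

theorem mul_eq_mul_comp_of_section {A R : Type*} [Mul A] {π : A → R} {f g : R → A}
    (hg : ∀ a, π (g (π a)) = π a) {Υ : A} (hf : ∀ a, Υ * a = Υ * f (π a)) (a : A) :
    Υ * a = Υ * g (π a) :=
  calc Υ * a = Υ * f (π a) := hf a
    _ = Υ * f (π (g (π a))) := by rw [hg]
    _ = Υ * g (π a) := (hf _).symm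

namespace HopfAlgebroidData

variable {A L R : Type u} [Ring A] [Ring L] [Ring R] (H : HopfAlgebroidData A L R)

theorem πR_sR_πR (a : A) : H.πR (H.sR (H.πR a)) = H.πR a := by
  simpa using H.πR_lunit a 1

theorem πR_tR_πR (a : A) : H.πR (H.tR (H.πR a)) = H.πR a := by
  simpa using H.πR_lunit' a 1

end HopfAlgebroidData

/-- In a Hopf algebroid, `Υ ∈ A` satisfies `Υa = Υ s_R(π_R(a))` for all
`a ∈ A` iff it satisfies `Υa = Υ t_R(π_R(a))` for all `a ∈ A`. -/
theorem right_integral_sR_iff_tR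
    {A L R : Type u} [Ring A] [Ring L] [Ring R]
    (H : HopfAlgebroidData A L R) (Υ : A) :
    (∀ a, Υ * a = Υ * H.sR (H.πR a)) ↔ (∀ a, Υ * a = Υ * H.tR (H.πR a)) :=
  ⟨mul_eq_mul_comp_of_section H.πR_tR_πR, mul_eq_mul_comp_of_section H.πR_sR_πR⟩
end

section
/- Let H be a Hopf algebroid with non-degenerate right integral i, and define the convolution product h₁ ∗ h₂ = {}_Li({}_Li⁻¹(h₁) · {}_Li⁻¹(h₂)) on the additive group of H and the unit map η : R → H, r ↦ i s_R(r). Then (H_H, ∗, η, γ_R, π_R) is a Frobenius algebra in the monoidal category M_H of right H-modules: (H_H, ∗, η) is a monoid, (H_H, γ_R, π_R) is a comonoid, and γ_R(h ∗ k) = h⁽¹⁾ ⊗ (h⁽²⁾ ∗ k) = (h ∗ k⁽¹⁾) ⊗ k⁽²⁾. -/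
/-!
Maps out of `H ⊗ H` are handled as balanced biadditive functions evaluated on Sweedler sums.
Mixed coassociativity and the antipode axioms give `S(x₍₁₎) x₍₂₎⁽¹⁾ ⊗ x₍₂₎⁽²⁾ = 1 ⊗ x`, whence
`S` is anti-multiplicative, and `x⁽¹⁾₍₁₎ ⊗ x⁽¹⁾₍₂₎ S(x⁽²⁾) = x ⊗ 1`, which together with
`i a = i s_R(π_R a)` gives `i₍₁₎ a ⊗ i₍₂₎ = i₍₁₎ ⊗ i₍₂₎ S(a)` and hence `i ∗ a = a`.
Injectivity of `{}_Li` makes `ρ` right `s_L`-linear, surjectivity of `i_L` gives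
`h = s_L(ρ(h S(i₍₁₎))) i₍₂₎`, and with coassociativity these yield the second closed form
`h ∗ k = s_L(ρ(h S(k₍₁₎))) k₍₂₎`. Expanding `(h ∗ k) ∗ m` and `h ∗ (k ∗ m)` through the two forms
proves associativity; the unit laws follow from `i ∗ a = a` and the expansion of `h`, and the
Frobenius identities are the mixed coassociativity axioms applied to the two closed forms.
That `∗` is a module map uses the anti-multiplicativity of `S`.
-/

universe u

namespace HopfAlgebroidData

variable {A L R : Type u} [Ring A] [Ring L] [Ring R] (H : HopfAlgebroidData A L R)

/-- The left `L`-dual `{}_*H` of `{}_L H` (maps `{}_L A → {}_L L`). -/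
def LStarDual : Type u :=
  {φ : A → L // (∀ x y, φ (x + y) = φ x + φ y) ∧ ∀ l x, φ (H.sL l * x) = l * φ x}

/-- The right `L`-dual `H_*` of `H_L` (maps `A_L → L_L`). -/
def StarLDual : Type u :=
  {φ : A → L // (∀ x y, φ (x + y) = φ x + φ y) ∧ ∀ l x, φ (H.tL l * x) = φ x * l}

/-- The map `{}_L i : {}_*H → H`, `φ ↦ i ⇁ φ = t_L(φ(i₍₂₎)) i₍₁₎`. -/
def intMapL (i : A) : H.LStarDual → A :=
  fun φ => ∑ k ∈ Finset.range (H.nL i), H.tL (φ.1 (H.c2 i k)) * H.c1 i k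

/-- The map `i_L : H_* → H`, `φ ↦ i ↼ φ = s_L(φ(i₍₁₎)) i₍₂₎`. -/
def intMapR (i : A) : H.StarLDual → A :=
  fun φ => ∑ k ∈ Finset.range (H.nL i), H.sL (φ.1 (H.c1 i k)) * H.c2 i k

/-- The convolution product `h ∗ k = t_L(ρ(h₍₂₎ S(k))) h₍₁₎`, where `ρ = {}_L i⁻¹(1)`. -/
def hconv (ρ : A → L) (h k : A) : A :=
  ∑ j ∈ Finset.range (H.nL h), H.tL (ρ (H.c2 h j * H.S k)) * H.c1 h j

/-- The unit map `η : R → H`, `r ↦ i s_R(r)` of the convolution algebra. -/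
def heta (i : A) (r : R) : A := i * H.sR r

end HopfAlgebroidData

namespace HopfAlgebroidData

variable {A L R : Type u} [Ring A] [Ring L] [Ring R] (H : HopfAlgebroidData A L R)

theorem map_sum_of_map_add {ι X M : Type*} [AddCommMonoid X] [AddCommGroup M] {f : X → M}
    (hf : ∀ x y, f (x + y) = f x + f y) (s : Finset ι) (g : ι → X) :
    f (∑ x ∈ s, g x) = ∑ x ∈ s, f (g x) :=
  map_sum (AddMonoidHom.mk' f hf) g s

theorem S_sum {ι : Type*} (s : Finset ι) (g : ι → A) : H.S (∑ x ∈ s, g x) = ∑ x ∈ s, H.S (g x) :=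
  map_sum_of_map_add H.S_add s g

theorem S_tL_mul (l : L) (x : A) : H.S (H.tL l * x) = H.S x * H.sL l := by
  simpa [H.tL_one, H.sL_one] using H.S_twistL l 1 x

theorem S_mul_tL (l : L) (x : A) : H.S (x * H.tL l) = H.sL l * H.S x := by
  simpa [H.tL_one, H.sL_one] using H.S_twistL 1 l x

theorem S_mul_tR (r : R) (x : A) : H.S (x * H.tR r) = H.sR r * H.S x := by
  simpa [H.tR_one, H.sR_one] using H.S_twistR r 1 x

section Sweedler

variable {M : Type u} [AddCommGroup M] {ι : Type*}

/-- `f(a₍₁₎, a₍₂₎)` in Sweedler notation for `γ_L`. -/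
def sweedlerL (f : A → A → M) (a : A) : M :=
  ∑ i ∈ Finset.range (H.nL a), f (H.c1 a i) (H.c2 a i)

/-- `f(a⁽¹⁾, a⁽²⁾)` in Sweedler notation for `γ_R`. -/
def sweedlerR (f : A → A → M) (a : A) : M :=
  ∑ i ∈ Finset.range (H.nR a), f (H.d1 a i) (H.d2 a i)

/-- `IsBalancedL f` (resp. `IsBalancedR f`) says that `f` induces an additive map on
`H_L ⊗_L {}_L H` (resp. `H_R ⊗_R {}_R H`); the coproduct axioms are stated against such maps. -/
structure IsBalancedL (f : A → A → M) : Prop where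
  add_left : ∀ u u' v, f (u + u') v = f u v + f u' v
  add_right : ∀ u v v', f u (v + v') = f u v + f u v'
  tL_mul_left : ∀ l u v, f (H.tL l * u) v = f u (H.sL l * v)

structure IsBalancedR (f : A → A → M) : Prop where
  add_left : ∀ u u' v, f (u + u') v = f u v + f u' v
  add_right : ∀ u v v', f u (v + v') = f u v + f u v'
  mul_sR_left : ∀ r u v, f (u * H.sR r) v = f u (v * H.tR r)

variable {H}

theorem IsBalancedL.sum_left {f : A → A → M} (hf : H.IsBalancedL f) (s : Finset ι) (g : ι → A)
    (v : A) : f (∑ t ∈ s, g t) v = ∑ t ∈ s, f (g t) v :=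
  map_sum_of_map_add (f := (f · v)) (hf.add_left · · v) s g

theorem IsBalancedL.sum_right {f : A → A → M} (hf : H.IsBalancedL f) (u : A) (s : Finset ι)
    (g : ι → A) : f u (∑ t ∈ s, g t) = ∑ t ∈ s, f u (g t) :=
  map_sum_of_map_add (hf.add_right u) s g

theorem IsBalancedL.comp_mul {f : A → A → M} (hf : H.IsBalancedL f) (x y : A) :
    H.IsBalancedL (fun u v => f (u * x) (v * y)) where
  add_left u u' v := by simp only [add_mul, hf.add_left]
  add_right u v v' := by simp only [add_mul, hf.add_right]
  tL_mul_left l u v := by simp only [mul_assoc, hf.tL_mul_left]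

theorem IsBalancedL.comp_mul_right {f : A → A → M} (hf : H.IsBalancedL f) (y : A) :
    H.IsBalancedL (fun u v => f u (v * y)) := by
  simpa using hf.comp_mul 1 y

theorem IsBalancedR.sum_left {f : A → A → M} (hf : H.IsBalancedR f) (s : Finset ι) (g : ι → A)
    (v : A) : f (∑ t ∈ s, g t) v = ∑ t ∈ s, f (g t) v :=
  map_sum_of_map_add (f := (f · v)) (hf.add_left · · v) s g

theorem IsBalancedR.sum_right {f : A → A → M} (hf : H.IsBalancedR f) (u : A) (s : Finset ι)
    (g : ι → A) : f u (∑ t ∈ s, g t) = ∑ t ∈ s, f u (g t) :=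
  map_sum_of_map_add (hf.add_right u) s g

theorem IsBalancedR.comp_mul {f : A → A → M} (hf : H.IsBalancedR f) (x y : A) :
    H.IsBalancedR (fun u v => f (x * u) (y * v)) where
  add_left u u' v := by simp only [mul_add, hf.add_left]
  add_right u v v' := by simp only [mul_add, hf.add_right]
  mul_sR_left r u v := by simp only [← mul_assoc, hf.mul_sR_left]

variable (H)

theorem sweedlerL_add {f : A → A → M} (hf : H.IsBalancedL f) (a b : A) :
    H.sweedlerL f (a + b) = H.sweedlerL f a + H.sweedlerL f b :=
  H.comulL_add f hf.add_left hf.add_right hf.tL_mul_left a b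

theorem sweedlerL_sum {f : A → A → M} (hf : H.IsBalancedL f) (s : Finset ι) (g : ι → A) :
    H.sweedlerL f (∑ t ∈ s, g t) = ∑ t ∈ s, H.sweedlerL f (g t) :=
  map_sum (AddMonoidHom.mk' (H.sweedlerL f) (H.sweedlerL_add hf)) g s

theorem sweedlerL_sL_tL_mul {f : A → A → M} (hf : H.IsBalancedL f) (l l' : L) (a : A) :
    H.sweedlerL f (H.sL l * H.tL l' * a) =
      H.sweedlerL (fun u v => f (H.sL l * u) (H.tL l' * v)) a :=
  H.comulL_bimod f hf.add_left hf.add_right hf.tL_mul_left l l' a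

theorem sweedlerL_sL_mul {f : A → A → M} (hf : H.IsBalancedL f) (l : L) (a : A) :
    H.sweedlerL f (H.sL l * a) = H.sweedlerL (fun u v => f (H.sL l * u) v) a := by
  simpa [H.tL_one] using H.sweedlerL_sL_tL_mul hf l 1 a

theorem sweedlerL_tL_mul {f : A → A → M} (hf : H.IsBalancedL f) (l : L) (a : A) :
    H.sweedlerL f (H.tL l * a) = H.sweedlerL (fun u v => f u (H.tL l * v)) a := by
  simpa [H.sL_one] using H.sweedlerL_sL_tL_mul hf 1 l a

theorem sweedlerL_takeuchi {f : A → A → M} (hf : H.IsBalancedL f) (l : L) (a : A) :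
    H.sweedlerL (fun u v => f (u * H.tL l) v) a = H.sweedlerL (fun u v => f u (v * H.sL l)) a :=
  H.comulL_takeuchi f hf.add_left hf.add_right hf.tL_mul_left l a

theorem sweedlerL_one {f : A → A → M} (hf : H.IsBalancedL f) : H.sweedlerL f 1 = f 1 1 :=
  H.comulL_one f hf.add_left hf.add_right hf.tL_mul_left

theorem sweedlerL_mul {f : A → A → M} (hf : H.IsBalancedL f) (a b : A) :
    H.sweedlerL f (a * b) =
      H.sweedlerL (fun α β => H.sweedlerL (fun u v => f (u * α) (v * β)) a) b :=
  (H.comulL_mul f hf.add_left hf.add_right hf.tL_mul_left a b).trans Finset.sum_comm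

variable {H} in
theorem IsBalancedL.sweedlerL_comp_mul {f : A → A → M} (hf : H.IsBalancedL f) (a : A) :
    H.IsBalancedL (fun α β => H.sweedlerL (fun u v => f (u * α) (v * β)) a) where
  add_left α α' β := by
    simp only [sweedlerL, mul_add, hf.add_left, Finset.sum_add_distrib]
  add_right α β β' := by
    simp only [sweedlerL, mul_add, hf.add_right, Finset.sum_add_distrib]
  tL_mul_left l α β := by
    simpa only [mul_assoc] using H.sweedlerL_takeuchi (hf.comp_mul α β) l a

theorem sweedlerL_tL {f : A → A → M} (hf : H.IsBalancedL f) (l : L) :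
    H.sweedlerL f (H.tL l) = f 1 (H.tL l) := by
  have hg : H.IsBalancedL (fun u v => f u (H.tL l * v)) :=
    { add_left := fun u u' v => hf.add_left u u' _
      add_right := fun u v v' => by simp only [mul_add, hf.add_right]
      tL_mul_left := fun m u v => by
        rw [hf.tL_mul_left, ← mul_assoc, ← mul_assoc, H.commL] }
  simpa using (H.sweedlerL_tL_mul hf l 1).trans (H.sweedlerL_one hg)

theorem sweedlerL_mul_tL {f : A → A → M} (hf : H.IsBalancedL f) (l : L) (a : A) :
    H.sweedlerL f (a * H.tL l) = H.sweedlerL (fun u v => f u (v * H.tL l)) a := by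
  simpa using (H.sweedlerL_mul hf a (H.tL l)).trans (H.sweedlerL_tL (hf.sweedlerL_comp_mul a) l)

theorem sweedlerL_mul_sR {f : A → A → M} (hf : H.IsBalancedL f) (r : R) (a : A) :
    H.sweedlerL f (a * H.sR r) = H.sweedlerL (fun u v => f u (v * H.sR r)) a := by
  obtain ⟨l, hl⟩ : H.sR r ∈ Set.range H.tL := H.range_tL_sR ▸ ⟨r, rfl⟩
  rw [← hl, H.sweedlerL_mul_tL hf]

theorem sweedlerR_add {f : A → A → M} (hf : H.IsBalancedR f) (a b : A) :
    H.sweedlerR f (a + b) = H.sweedlerR f a + H.sweedlerR f b :=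
  H.comulR_add f hf.add_left hf.add_right hf.mul_sR_left a b

theorem sweedlerR_sum {f : A → A → M} (hf : H.IsBalancedR f) (s : Finset ι) (g : ι → A) :
    H.sweedlerR f (∑ t ∈ s, g t) = ∑ t ∈ s, H.sweedlerR f (g t) :=
  map_sum (AddMonoidHom.mk' (H.sweedlerR f) (H.sweedlerR_add hf)) g s

theorem sweedlerR_mul_sR_tR {f : A → A → M} (hf : H.IsBalancedR f) (r r' : R) (a : A) :
    H.sweedlerR f (a * H.sR r' * H.tR r) =
      H.sweedlerR (fun u v => f (u * H.tR r) (v * H.sR r')) a :=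
  H.comulR_bimod f hf.add_left hf.add_right hf.mul_sR_left r r' a

theorem sweedlerR_mul_tR {f : A → A → M} (hf : H.IsBalancedR f) (r : R) (a : A) :
    H.sweedlerR f (a * H.tR r) = H.sweedlerR (fun u v => f (u * H.tR r) v) a := by
  simpa [H.sR_one] using H.sweedlerR_mul_sR_tR hf r 1 a

theorem sweedlerR_mul_sR {f : A → A → M} (hf : H.IsBalancedR f) (r : R) (a : A) :
    H.sweedlerR f (a * H.sR r) = H.sweedlerR (fun u v => f u (v * H.sR r)) a := by
  simpa [H.tR_one] using H.sweedlerR_mul_sR_tR hf 1 r a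

theorem sweedlerR_takeuchi {f : A → A → M} (hf : H.IsBalancedR f) (r : R) (a : A) :
    H.sweedlerR (fun u v => f (H.sR r * u) v) a = H.sweedlerR (fun u v => f u (H.tR r * v)) a :=
  H.comulR_takeuchi f hf.add_left hf.add_right hf.mul_sR_left r a

theorem sweedlerR_one {f : A → A → M} (hf : H.IsBalancedR f) : H.sweedlerR f 1 = f 1 1 :=
  H.comulR_one f hf.add_left hf.add_right hf.mul_sR_left

theorem sweedlerR_mul {f : A → A → M} (hf : H.IsBalancedR f) (a b : A) :
    H.sweedlerR f (a * b) =
      H.sweedlerR (fun α β => H.sweedlerR (fun u v => f (α * u) (β * v)) b) a :=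
  H.comulR_mul f hf.add_left hf.add_right hf.mul_sR_left a b

variable {H} in
theorem IsBalancedR.sweedlerR_comp_mul {f : A → A → M} (hf : H.IsBalancedR f) (b : A) :
    H.IsBalancedR (fun α β => H.sweedlerR (fun u v => f (α * u) (β * v)) b) where
  add_left α α' β := by
    simp only [sweedlerR, add_mul, hf.add_left, Finset.sum_add_distrib]
  add_right α β β' := by
    simp only [sweedlerR, add_mul, hf.add_right, Finset.sum_add_distrib]
  mul_sR_left r α β := by
    simpa only [mul_assoc] using H.sweedlerR_takeuchi (hf.comp_mul α β) r b

theorem sweedlerR_tR {f : A → A → M} (hf : H.IsBalancedR f) (r : R) :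
    H.sweedlerR f (H.tR r) = f (H.tR r) 1 := by
  have hg : H.IsBalancedR (fun u v => f (u * H.tR r) v) :=
    { add_left := fun u u' v => by simp only [add_mul, hf.add_left]
      add_right := fun u v v' => hf.add_right _ v v'
      mul_sR_left := fun r' u v => by
        rw [mul_assoc, H.commR, ← mul_assoc, hf.mul_sR_left] }
  simpa using (H.sweedlerR_mul_tR hf r 1).trans (H.sweedlerR_one hg)

theorem sweedlerR_sR {f : A → A → M} (hf : H.IsBalancedR f) (r : R) :
    H.sweedlerR f (H.sR r) = f 1 (H.sR r) := by
  have hg : H.IsBalancedR (fun u v => f u (v * H.sR r)) :=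
    { add_left := fun u u' v => hf.add_left u u' _
      add_right := fun u v v' => by simp only [add_mul, hf.add_right]
      mul_sR_left := fun r' u v => by
        rw [hf.mul_sR_left, mul_assoc, mul_assoc, H.commR] }
  simpa using (H.sweedlerR_mul_sR hf r 1).trans (H.sweedlerR_one hg)

theorem sweedlerR_tR_mul {f : A → A → M} (hf : H.IsBalancedR f) (r : R) (a : A) :
    H.sweedlerR f (H.tR r * a) = H.sweedlerR (fun u v => f (H.tR r * u) v) a := by
  simpa using (H.sweedlerR_mul hf (H.tR r) a).trans (H.sweedlerR_tR (hf.sweedlerR_comp_mul a) r)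

theorem sweedlerR_sR_mul {f : A → A → M} (hf : H.IsBalancedR f) (r : R) (a : A) :
    H.sweedlerR f (H.sR r * a) = H.sweedlerR (fun u v => f u (H.sR r * v)) a := by
  simpa using (H.sweedlerR_mul hf (H.sR r) a).trans (H.sweedlerR_sR (hf.sweedlerR_comp_mul a) r)

theorem sweedlerR_sL_mul {f : A → A → M} (hf : H.IsBalancedR f) (l : L) (a : A) :
    H.sweedlerR f (H.sL l * a) = H.sweedlerR (fun u v => f (H.sL l * u) v) a := by
  obtain ⟨r, hr⟩ : H.sL l ∈ Set.range H.tR := H.range_sL_tR ▸ ⟨l, rfl⟩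
  rw [← hr, H.sweedlerR_tR_mul hf]

theorem sweedlerR_tL_mul {f : A → A → M} (hf : H.IsBalancedR f) (l : L) (a : A) :
    H.sweedlerR f (H.tL l * a) = H.sweedlerR (fun u v => f u (H.tL l * v)) a := by
  obtain ⟨r, hr⟩ : H.tL l ∈ Set.range H.sR := H.range_tL_sR ▸ ⟨l, rfl⟩
  rw [← hr, H.sweedlerR_sR_mul hf]

end Sweedler

theorem isBalancedR_mul_S : H.IsBalancedR (fun u v => u * H.S v) where
  add_left u u' v := add_mul u u' _
  add_right u v v' := by rw [H.S_add, mul_add]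
  mul_sR_left r u v := by rw [H.S_mul_tR, mul_assoc]

theorem sweedlerR_mul_S (a : A) : H.sweedlerR (fun u v => u * H.S v) a = H.sL (H.πL a) :=
  H.antipode_R a

theorem sL_πL_sL_mul (l : L) (a : A) : H.sL (H.πL (H.sL l * a)) = H.sL l * H.sL (H.πL a) := by
  rw [← H.sweedlerR_mul_S, ← H.sweedlerR_mul_S, H.sweedlerR_sL_mul H.isBalancedR_mul_S]
  simp only [sweedlerR, Finset.mul_sum, mul_assoc]

theorem sweedlerL_S_mul_sL_πL (a : A) :
    H.sweedlerL (fun u v => H.S u * H.sL (H.πL v)) a = H.S a := by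
  conv_rhs => rw [← H.counitL_right a, S_sum]
  simp only [sweedlerL, S_tL_mul]

theorem isBalancedL_S_mul_sL_πL : H.IsBalancedL (fun u v => H.S u * H.sL (H.πL v)) where
  add_left u u' v := by rw [H.S_add, add_mul]
  add_right u v v' := by rw [H.πL_add, H.sL_add, mul_add]
  tL_mul_left l u v := by rw [S_tL_mul, sL_πL_sL_mul, mul_assoc]

theorem sweedlerL_S_mul_sL_πL_mul (a y : A) :
    H.sweedlerL (fun u v => H.S u * H.sL (H.πL (v * y))) a = H.sL (H.πL y) * H.S a := by
  simp only [← H.πL_runit _ y]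
  rw [← H.sweedlerL_takeuchi H.isBalancedL_S_mul_sL_πL]
  simp only [S_mul_tL, mul_assoc]
  rw [← H.sweedlerL_S_mul_sL_πL a]
  simp only [sweedlerL, Finset.mul_sum]

/-- `S(x₍₁₎) x₍₂₎⁽¹⁾ ⊗_R x₍₂₎⁽²⁾ = 1 ⊗_R x`. -/
theorem sweedlerL_sweedlerR_S_mul {M : Type u} [AddCommGroup M] {f : A → A → M}
    (hf : H.IsBalancedR f) (x : A) :
    H.sweedlerL (fun u v => H.sweedlerR (fun v₁ v₂ => f (H.S u * v₁) v₂) v) x = f 1 x := by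
  have hmix := H.mixed₁ (fun u v w => f (H.S u * v) w)
    (fun u u' v w => by simp only [H.S_add, add_mul, hf.add_left])
    (fun u v v' w => by simp only [mul_add, hf.add_left])
    (fun u v w w' => hf.add_right _ w w')
    (fun l u v w => by simp only [S_tL_mul, mul_assoc])
    (fun r u v w => by simp only [← mul_assoc, hf.mul_sR_left]) x
  calc H.sweedlerL (fun u v => H.sweedlerR (fun v₁ v₂ => f (H.S u * v₁) v₂) v) x
      = H.sweedlerR (fun v₁ v₂ => f (H.sR (H.πR v₁)) v₂) x := by
        refine hmix.symm.trans (Finset.sum_congr rfl fun p _ => ?_)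
        beta_reduce
        rw [← H.antipode_L, hf.sum_left]
    _ = f 1 x := by
        simp only [sweedlerR]
        conv_rhs => rw [← H.counitR_right x, hf.sum_right]
        refine Finset.sum_congr rfl fun p _ => ?_
        rw [← hf.mul_sR_left, one_mul]

theorem S_mul (a b : A) : H.S (a * b) = H.S b * H.S a := by
  have hf : H.IsBalancedR (fun u v => u * H.S (a * v)) :=
    { add_left := fun u u' v => add_mul u u' _
      add_right := fun u v v' => by rw [mul_add, H.S_add, mul_add]
      mul_sR_left := fun r u v => by rw [← mul_assoc, H.S_mul_tR, mul_assoc] }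
  have hb := H.sweedlerL_sweedlerR_S_mul hf b
  have ha : ∀ v, H.sweedlerR (fun v₁ v₂ => v₁ * H.S (a * v₂)) v =
      H.sweedlerL (fun u' v' => H.S u' * H.sL (H.πL (v' * v))) a := by
    intro v
    have h := H.sweedlerL_sweedlerR_S_mul (H.isBalancedR_mul_S.sweedlerR_comp_mul v) a
    simp only [one_mul] at h
    rw [← h]
    simp only [← sweedlerR_mul_S, H.sweedlerR_mul H.isBalancedR_mul_S]
    simp only [sweedlerL, sweedlerR, Finset.mul_sum, mul_assoc]
  calc H.S (a * b)
      = H.sweedlerL (fun u v => H.S u * H.sweedlerR (fun v₁ v₂ => v₁ * H.S (a * v₂)) v) b := by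
        rw [← one_mul (H.S (a * b)), ← hb]
        simp only [sweedlerL, sweedlerR, Finset.mul_sum, mul_assoc]
    _ = H.sweedlerL (fun u v => H.S u *
          H.sweedlerL (fun u' v' => H.S u' * H.sL (H.πL (v' * v))) a) b := by
        simp only [ha]
    _ = H.sweedlerL (fun u v => H.S u * H.sL (H.πL v)) b * H.S a := by
        simp only [sweedlerL_S_mul_sL_πL_mul]
        simp only [sweedlerL, Finset.sum_mul, mul_assoc]
    _ = H.S b * H.S a := by rw [sweedlerL_S_mul_sL_πL]

theorem sweedlerR_mul_S_mul (k y : A) :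
    H.sweedlerR (fun u v => u * H.S (k * v)) y = H.sL (H.πL y) * H.S k := by
  simp only [sweedlerR, S_mul, ← mul_assoc, ← Finset.sum_mul]
  rw [← H.sweedlerR_mul_S]
  rfl

/-- `a⁽¹⁾₍₁₎ ⊗_L a⁽¹⁾₍₂₎ S(a⁽²⁾) = a ⊗_L 1`. -/
theorem sweedlerR_sweedlerL_mul_S {M : Type u} [AddCommGroup M] {f : A → A → M}
    (hf : H.IsBalancedL f) (a : A) :
    H.sweedlerR (fun p w => H.sweedlerL (fun u v => f u (v * H.S w)) p) a = f a 1 := by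
  have hmix := H.mixed₁ (fun u v w => f u (v * H.S w))
    (fun u u' v w => hf.add_left u u' _)
    (fun u v v' w => by simp only [add_mul, hf.add_right])
    (fun u v w w' => by simp only [H.S_add, mul_add, hf.add_right])
    (fun l u v w => by simp only [hf.tL_mul_left, mul_assoc])
    (fun r u v w => by simp only [S_mul_tR, mul_assoc]) a
  calc _ = H.sweedlerL (fun u v => f u (H.sL (H.πL v))) a := by
        refine hmix.trans (Finset.sum_congr rfl fun j _ => ?_)
        beta_reduce
        rw [← H.antipode_R, hf.sum_right]
    _ = f a 1 := by
        conv_rhs => rw [← H.counitL_right a, hf.sum_left]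
        refine Finset.sum_congr rfl fun j _ => ?_
        rw [hf.tL_mul_left, mul_one]

def IsRightIntegral (i : A) : Prop := ∀ a, i * a = i * H.sR (H.πR a)

/-- For a right integral, `i₍₁₎ a ⊗_L i₍₂₎ = i₍₁₎ ⊗_L i₍₂₎ S(a)`. -/
theorem sweedlerL_integral_mul {M : Type u} [AddCommGroup M] {f : A → A → M} {i : A}
    (hi : H.IsRightIntegral i) (hf : H.IsBalancedL f) (a : A) :
    H.sweedlerL (fun u v => f (u * a) v) i = H.sweedlerL (fun u v => f u (v * H.S a)) i := by
  have h := H.sweedlerR_sweedlerL_mul_S (hf.sweedlerL_comp_mul i) a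
  simp only [mul_one] at h
  rw [← h]
  have step : ∀ p w,
      H.sweedlerL (fun α β => H.sweedlerL (fun u v => f (u * α) (v * (β * H.S w))) i) p =
        H.sweedlerL (fun u v => f u (v * H.S (w * H.tR (H.πR p)))) i := by
    intro p w
    have hw := hf.comp_mul_right (H.S w)
    calc _ = H.sweedlerL (fun u v => f u (v * H.S w)) (i * p) := by
          rw [H.sweedlerL_mul hw]
          simp only [mul_assoc]
      _ = _ := by
          rw [hi p, H.sweedlerL_mul_sR hw]
          simp only [S_mul_tR, mul_assoc]
  simp only [step]
  conv_rhs => rw [← H.counitR_right a]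
  simp only [sweedlerL, sweedlerR, S_sum, Finset.mul_sum, hf.sum_right]
  exact Finset.sum_comm

instance : CoeFun H.LStarDual (fun _ => A → L) := ⟨Subtype.val⟩

instance : CoeFun H.StarLDual (fun _ => A → L) := ⟨Subtype.val⟩

variable {H}

theorem LStarDual.map_add (ρ : H.LStarDual) (x y : A) : ρ (x + y) = ρ x + ρ y := ρ.2.1 x y

theorem LStarDual.map_sL_mul (ρ : H.LStarDual) (l : L) (x : A) : ρ (H.sL l * x) = l * ρ x :=
  ρ.2.2 l x

theorem LStarDual.isBalancedL (ρ : H.LStarDual) : H.IsBalancedL (fun u v => H.tL (ρ v) * u) where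
  add_left u u' v := mul_add _ u u'
  add_right u v v' := by rw [ρ.map_add, H.tL_add, add_mul]
  tL_mul_left l u v := by rw [ρ.map_sL_mul, H.tL_mul, mul_assoc]

theorem sweedlerL_tL_mul_eq_intMapL_mul (ρ : H.LStarDual) (i a : A) :
    H.sweedlerL (fun u v => H.tL (ρ v) * (u * a)) i = H.intMapL i ρ * a := by
  simp only [sweedlerL, intMapL, ← mul_assoc, ← Finset.sum_mul]

/-- Right `s_L`-linearity of `ρ = {}_Li⁻¹(1)`: both sides are sent to `t_L l` by `{}_Li`. -/
theorem LStarDual.map_mul_sL {i : A} (hinj : Function.Injective (H.intMapL i))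
    {ρ : H.LStarDual} (hρ : H.intMapL i ρ = 1) (l : L) (x : A) : ρ (x * H.sL l) = ρ x * l := by
  let φ : H.LStarDual := ⟨fun x => ρ (x * H.sL l),
    fun x y => by simp only [add_mul, ρ.map_add],
    fun m x => by simp only [mul_assoc, ρ.map_sL_mul]⟩
  let ψ : H.LStarDual := ⟨fun x => ρ x * l,
    fun x y => by simp only [ρ.map_add, add_mul],
    fun m x => by simp only [ρ.map_sL_mul, mul_assoc]⟩
  have hφ : H.intMapL i φ = H.tL l := by
    calc H.intMapL i φ = H.sweedlerL (fun u v => H.tL (ρ v) * (u * H.tL l)) i :=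
          (H.sweedlerL_takeuchi ρ.isBalancedL l i).symm
      _ = H.tL l := by rw [sweedlerL_tL_mul_eq_intMapL_mul, hρ, one_mul]
  have hψ : H.intMapL i ψ = H.tL l := by
    calc H.intMapL i ψ = H.tL l * H.intMapL i ρ := by
          simp only [intMapL, Finset.mul_sum, ← mul_assoc, ← H.tL_mul]
          rfl
      _ = H.tL l := by rw [hρ, mul_one]
  exact congrFun (congrArg Subtype.val (hinj (hφ.trans hψ.symm))) x

theorem hconv_eq_sweedlerL (ρ : A → L) (h k : A) :
    H.hconv ρ h k = H.sweedlerL (fun u v => H.tL (ρ (v * H.S k)) * u) h := rfl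

theorem hconv_integral_left {i : A} (hi : H.IsRightIntegral i) {ρ : H.LStarDual}
    (hρ : H.intMapL i ρ = 1) (a : A) : H.hconv ρ i a = a := by
  rw [hconv_eq_sweedlerL, ← H.sweedlerL_integral_mul hi ρ.isBalancedL]
  rw [sweedlerL_tL_mul_eq_intMapL_mul, hρ, one_mul]

theorem StarLDual.map_add (φ : H.StarLDual) (x y : A) : φ (x + y) = φ x + φ y := φ.2.1 x y

theorem StarLDual.map_tL_mul (φ : H.StarLDual) (l : L) (x : A) : φ (H.tL l * x) = φ x * l :=
  φ.2.2 l x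

/-- `{}_Li⁻¹(1)` determines the inverse of `i_L`: `h = s_L(ρ(h S(i₍₁₎))) i₍₂₎`. -/
theorem sweedlerL_integral_sL_rho {i : A} (hi : H.IsRightIntegral i)
    (hsurj : Function.Surjective (H.intMapR i)) {ρ : H.LStarDual} (hρ : H.intMapL i ρ = 1)
    (h : A) : H.sweedlerL (fun u v => H.sL (ρ (h * H.S u)) * v) i = h := by
  obtain ⟨φ, rfl⟩ := hsurj h
  have key : ∀ z, ρ (H.intMapR i φ * H.S z) = φ z := by
    intro z
    calc ρ (H.intMapR i φ * H.S z)
        = ρ (H.sweedlerL (fun u v => H.sL (φ u) * (v * H.S z)) i) := by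
          simp only [intMapR, sweedlerL, Finset.sum_mul, mul_assoc]
      _ = H.sweedlerL (fun u v => φ u * ρ (v * H.S z)) i := by
          simp only [sweedlerL, map_sum_of_map_add ρ.map_add, ρ.map_sL_mul]
      _ = φ (H.hconv ρ i z) := by
          simp only [hconv_eq_sweedlerL, sweedlerL, map_sum_of_map_add φ.map_add, φ.map_tL_mul]
      _ = φ z := by rw [hconv_integral_left hi hρ]
  simp only [key]
  rfl

theorem LStarDual.isBalancedL_sL {i : A} (hinj : Function.Injective (H.intMapL i))
    {ρ : H.LStarDual} (hρ : H.intMapL i ρ = 1) (h : A) :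
    H.IsBalancedL (fun u v => H.sL (ρ (h * H.S u)) * v) where
  add_left u u' v := by rw [H.S_add, mul_add, ρ.map_add, H.sL_add, add_mul]
  add_right u v v' := mul_add _ v v'
  tL_mul_left l u v := by
    rw [S_tL_mul, ← mul_assoc, LStarDual.map_mul_sL hinj hρ, H.sL_mul, mul_assoc]

theorem hconv_sum_left (ρ : H.LStarDual) (s : Finset ℕ) (g : ℕ → A) (k : A) :
    H.hconv ρ (∑ t ∈ s, g t) k = ∑ t ∈ s, H.hconv ρ (g t) k :=
  H.sweedlerL_sum (ρ.isBalancedL.comp_mul_right _) s g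

theorem hconv_sL_mul (ρ : H.LStarDual) (l : L) (x k : A) :
    H.hconv ρ (H.sL l * x) k = H.sL l * H.hconv ρ x k := by
  simp only [hconv_eq_sweedlerL, H.sweedlerL_sL_mul (ρ.isBalancedL.comp_mul_right _)]
  simp only [sweedlerL, Finset.mul_sum, ← mul_assoc, H.commL]

theorem sweedlerL_hconv {M : Type u} [AddCommGroup M] {f : A → A → M} (hf : H.IsBalancedL f)
    (ρ : H.LStarDual) (x m : A) :
    H.sweedlerL f (H.hconv ρ x m) = H.sweedlerL (fun u v => f u (H.hconv ρ v m)) x := by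
  have hco := H.comulL_coassoc (fun u v w => f u (H.tL (ρ (w * H.S m)) * v))
    (fun u u' v w => hf.add_left u u' _)
    (fun u v v' w => by simp only [mul_add, hf.add_right])
    (fun u v w w' => by simp only [add_mul, ρ.map_add, H.tL_add, hf.add_right])
    (fun l u v w => by simp only [hf.tL_mul_left, ← mul_assoc, H.commL])
    (fun l u v w => by simp only [mul_assoc, ρ.map_sL_mul, H.tL_mul]) x
  calc H.sweedlerL f (H.hconv ρ x m)
      = ∑ j ∈ Finset.range (H.nL x), H.sweedlerL f (H.tL (ρ (H.c2 x j * H.S m)) * H.c1 x j) :=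
        H.sweedlerL_sum hf _ _
    _ = _ := by
      simp only [H.sweedlerL_tL_mul hf]
      refine hco.trans (Finset.sum_congr rfl fun j _ => ?_)
      simp only [hconv_eq_sweedlerL, sweedlerL, hf.sum_right]

theorem hconv_eq_sweedlerL_sL {i : A} (hi : H.IsRightIntegral i)
    (hinj : Function.Injective (H.intMapL i)) (hsurj : Function.Surjective (H.intMapR i))
    {ρ : H.LStarDual} (hρ : H.intMapL i ρ = 1) (h k : A) :
    H.hconv ρ h k = H.sweedlerL (fun u v => H.sL (ρ (h * H.S u)) * v) k := by
  have hf := LStarDual.isBalancedL_sL hinj hρ h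
  calc H.hconv ρ h k
      = H.hconv ρ (H.sweedlerL (fun u v => H.sL (ρ (h * H.S u)) * v) i) k := by
        rw [sweedlerL_integral_sL_rho hi hsurj hρ]
    _ = H.sweedlerL (fun u v => H.sL (ρ (h * H.S u)) * H.hconv ρ v k) i := by
        rw [sweedlerL, hconv_sum_left]
        simp only [hconv_sL_mul]
        rfl
    _ = _ := by rw [← sweedlerL_hconv hf, hconv_integral_left hi hρ]

theorem heta_πR_sR_mul {i : A} (hi : H.IsRightIntegral i) (r : R) (a : A) :
    H.heta i (H.πR (H.sR r * a)) = H.heta i r * a := by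
  rw [heta, heta, ← hi, mul_assoc]

theorem hconv_heta_left {i : A} (hi : H.IsRightIntegral i) {ρ : H.LStarDual}
    (hρ : H.intMapL i ρ = 1) (h : A) (r : R) : H.hconv ρ (H.heta i r) h = h * H.tR r := by
  rw [heta, hconv_eq_sweedlerL, H.sweedlerL_mul_sR (ρ.isBalancedL.comp_mul_right _)]
  simp only [mul_assoc, ← S_mul_tR]
  exact hconv_integral_left hi hρ (h * H.tR r)

theorem hconv_heta_right {i : A} (hi : H.IsRightIntegral i)
    (hinj : Function.Injective (H.intMapL i)) (hsurj : Function.Surjective (H.intMapR i))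
    {ρ : H.LStarDual} (hρ : H.intMapL i ρ = 1) (h : A) (r : R) :
    H.hconv ρ h (H.heta i r) = h * H.sR r := by
  rw [hconv_eq_sweedlerL_sL hi hinj hsurj hρ, heta,
    H.sweedlerL_mul_sR (LStarDual.isBalancedL_sL hinj hρ h)]
  conv_rhs => rw [← sweedlerL_integral_sL_rho hi hsurj hρ h]
  simp only [sweedlerL, Finset.sum_mul, mul_assoc]

theorem hconv_assoc {i : A} (hi : H.IsRightIntegral i)
    (hinj : Function.Injective (H.intMapL i)) (hsurj : Function.Surjective (H.intMapR i))
    {ρ : H.LStarDual} (hρ : H.intMapL i ρ = 1) (h k m : A) :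
    H.hconv ρ (H.hconv ρ h k) m = H.hconv ρ h (H.hconv ρ k m) := by
  rw [hconv_eq_sweedlerL_sL hi hinj hsurj hρ h k, hconv_eq_sweedlerL_sL hi hinj hsurj hρ h,
    sweedlerL_hconv (LStarDual.isBalancedL_sL hinj hρ h), sweedlerL, hconv_sum_left]
  simp only [hconv_sL_mul]
  rfl

theorem sweedlerR_hconv_left {M : Type u} [AddCommGroup M] {f : A → A → M}
    (hf : H.IsBalancedR f) (ρ : H.LStarDual) (h k : A) :
    H.sweedlerR f (H.hconv ρ h k) = H.sweedlerR (fun u v => f u (H.hconv ρ v k)) h := by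
  have hmix := H.mixed₂ (fun u v w => f u (H.tL (ρ (w * H.S k)) * v))
    (fun u u' v w => hf.add_left u u' _)
    (fun u v v' w => by simp only [mul_add, hf.add_right])
    (fun u v w w' => by simp only [add_mul, ρ.map_add, H.tL_add, hf.add_right])
    (fun r u v w => by simp only [hf.mul_sR_left, mul_assoc])
    (fun l u v w => by simp only [mul_assoc, ρ.map_sL_mul, H.tL_mul]) h
  calc H.sweedlerR f (H.hconv ρ h k)
      = ∑ j ∈ Finset.range (H.nL h), H.sweedlerR f (H.tL (ρ (H.c2 h j * H.S k)) * H.c1 h j) :=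
        H.sweedlerR_sum hf _ _
    _ = _ := by
      simp only [H.sweedlerR_tL_mul hf]
      refine hmix.trans (Finset.sum_congr rfl fun j _ => ?_)
      simp only [hconv_eq_sweedlerL, sweedlerL, hf.sum_right]

theorem sweedlerR_hconv_right {M : Type u} [AddCommGroup M] {f : A → A → M}
    (hf : H.IsBalancedR f) {i : A} (hi : H.IsRightIntegral i)
    (hinj : Function.Injective (H.intMapL i)) (hsurj : Function.Surjective (H.intMapR i))
    {ρ : H.LStarDual} (hρ : H.intMapL i ρ = 1) (h k : A) :
    H.sweedlerR f (H.hconv ρ h k) = H.sweedlerR (fun u v => f (H.hconv ρ h u) v) k := by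
  have hg := LStarDual.isBalancedL_sL hinj hρ h
  have hmix := H.mixed₁ (fun u v w => f (H.sL (ρ (h * H.S u)) * v) w)
    (fun u u' v w => by simp only [hg.add_left, hf.add_left])
    (fun u v v' w => by simp only [mul_add, hf.add_left])
    (fun u v w w' => hf.add_right _ w w')
    (fun l u v w => by simp only [hg.tL_mul_left])
    (fun r u v w => by simp only [← mul_assoc, hf.mul_sR_left]) k
  rw [hconv_eq_sweedlerL_sL hi hinj hsurj hρ, sweedlerL, H.sweedlerR_sum hf]
  simp only [H.sweedlerR_sL_mul hf]
  refine hmix.symm.trans (Finset.sum_congr rfl fun j _ => ?_)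
  simp only [hconv_eq_sweedlerL_sL hi hinj hsurj hρ, sweedlerL, hf.sum_left]

theorem sweedlerR_hconv_mul (ρ : H.LStarDual) (h k m : A) :
    H.sweedlerR (fun u v => H.hconv ρ (h * u) (k * v)) m = H.hconv ρ h k * m := by
  let g : A → A → A → A := fun u v w =>
    H.sweedlerL (fun x y => H.tL (ρ (y * (v * H.S (k * w)))) * (x * u)) h
  have hmix := H.mixed₁ g
    (fun u u' v w => by simp only [g, sweedlerL, mul_add, Finset.sum_add_distrib])
    (fun u v v' w => by
      simp only [g, sweedlerL, add_mul, mul_add, ρ.map_add, H.tL_add, Finset.sum_add_distrib])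
    (fun u v w w' => by
      simp only [g, sweedlerL, mul_add, H.S_add, add_mul, ρ.map_add, H.tL_add,
        Finset.sum_add_distrib])
    (fun l u v w => by
      simpa only [g, mul_assoc] using
        H.sweedlerL_takeuchi (ρ.isBalancedL.comp_mul u (v * H.S (k * w))) l h)
    (fun r u v w => by simp only [g]; rw [← mul_assoc k, S_mul_tR, mul_assoc v]) m
  calc H.sweedlerR (fun u v => H.hconv ρ (h * u) (k * v)) m
      = H.sweedlerR (fun u v => H.sweedlerL (fun u' v' => g u' v' v) u) m := by
        simp only [hconv_eq_sweedlerL, H.sweedlerL_mul (ρ.isBalancedL.comp_mul_right _)]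
        simp only [g, sweedlerL, sweedlerR, mul_assoc]
    _ = H.sweedlerL (fun u v =>
          H.sweedlerL (fun x y => H.tL (ρ (y * (H.sL (H.πL v) * H.S k))) * (x * u)) h) m := by
        refine hmix.trans (Finset.sum_congr rfl fun j _ => ?_)
        beta_reduce
        rw [← sweedlerR_mul_S_mul]
        simp only [g, sweedlerL, sweedlerR, Finset.mul_sum, ρ.isBalancedL.sum_right]
        exact Finset.sum_comm
    _ = H.sweedlerL (fun u v =>
          H.sweedlerL (fun x y => H.tL (ρ (y * H.S k)) * (x * (H.tL (H.πL v) * u))) h) m := by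
        refine Finset.sum_congr rfl fun j _ => ?_
        simpa only [mul_assoc] using (H.sweedlerL_takeuchi
          (ρ.isBalancedL.comp_mul (H.c1 m j) (H.S k)) (H.πL (H.c2 m j)) h).symm
    _ = H.sweedlerL (fun x y => H.tL (ρ (y * H.S k)) * (x * m)) h := by
        conv_rhs => rw [← H.counitL_right m]
        simp only [sweedlerL, Finset.mul_sum]
        exact Finset.sum_comm
    _ = H.hconv ρ h k * m := by
        simp only [hconv_eq_sweedlerL, sweedlerL, Finset.sum_mul, mul_assoc]

end HopfAlgebroidData

/-- Let `H` be a Hopf algebroid with non-degenerate right integral `i`,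
`ρ = {}_Li⁻¹(1)`, and define the convolution `h ∗ k = t_L(ρ(h₍₂₎ S k)) h₍₁₎` (the closed form
of `{}_Li({}_Li⁻¹(h)·{}_Li⁻¹(k))`) and `η : R → H, r ↦ i s_R(r)`.  Then
`(H_H, ∗, η, γ_R, π_R)` is a Frobenius algebra in the monoidal category `M_H` of right
`H`-modules: `∗` and `η` are right `H`-module maps, `(H_H, ∗, η)` is a monoid,
`(H_H, γ_R, π_R)` is a comonoid, and `γ_R(h ∗ k) = h⁽¹⁾ ⊗ (h⁽²⁾ ∗ k) = (h ∗ k⁽¹⁾) ⊗ k⁽²⁾`. -/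
theorem convolution_frobenius_algebra
    {A L R : Type u} [Ring A] [Ring L] [Ring R]
    (H : HopfAlgebroidData A L R) (i : A)
    -- `i` is a right integral
    (hri : ∀ a, i * a = i * H.sR (H.πR a))
    -- non-degeneracy of `i`
    (hnd₁ : Function.Bijective (H.intMapL i))
    (hnd₂ : Function.Bijective (H.intMapR i))
    -- `ρ = {}_Li⁻¹(1_H)`
    (ρ : A → L) (hρ_add : ∀ x y, ρ (x + y) = ρ x + ρ y)
    (hρ_lin : ∀ l x, ρ (H.sL l * x) = l * ρ x)
    (hρ : (∑ k ∈ Finset.range (H.nL i), H.tL (ρ (H.c2 i k)) * H.c1 i k) = 1) :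
    -- `∗` is a right `H`-module map `H ⊗ H → H` (diagonal right action via `γ_R`)
    (∀ h k m, (∑ j ∈ Finset.range (H.nR m),
        H.hconv ρ (h * H.d1 m j) (k * H.d2 m j)) = H.hconv ρ h k * m) ∧
    -- `η` is a right `H`-module map (`R` carrying the action `r·a = π_R(s_R(r) a)`)
    (∀ r a, H.heta i (H.πR (H.sR r * a)) = H.heta i r * a) ∧
    -- associativity of `∗`
    (∀ h k m, H.hconv ρ (H.hconv ρ h k) m = H.hconv ρ h (H.hconv ρ k m)) ∧
    -- unit laws: `h ∗ η(r) = h s_R(r)` and `η(r) ∗ h = h t_R(r)`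
    (∀ h r, H.hconv ρ h (H.heta i r) = h * H.sR r) ∧
    (∀ h r, H.hconv ρ (H.heta i r) h = h * H.tR r) ∧
    -- Frobenius compatibility `γ_R(h ∗ k) = h⁽¹⁾ ⊗ (h⁽²⁾ ∗ k) = (h ∗ k⁽¹⁾) ⊗ k⁽²⁾`
    (∀ (M : Type u) (_ : AddCommGroup M) (f : A → A → M),
      (∀ u u' v, f (u + u') v = f u v + f u' v) →
      (∀ u v v', f u (v + v') = f u v + f u v') →
      (∀ r u v, f (u * H.sR r) v = f u (v * H.tR r)) →
      ∀ h k,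
        (∑ j ∈ Finset.range (H.nR (H.hconv ρ h k)),
          f (H.d1 (H.hconv ρ h k) j) (H.d2 (H.hconv ρ h k) j)) =
        (∑ j ∈ Finset.range (H.nR h), f (H.d1 h j) (H.hconv ρ (H.d2 h j) k)) ∧
        (∑ j ∈ Finset.range (H.nR (H.hconv ρ h k)),
          f (H.d1 (H.hconv ρ h k) j) (H.d2 (H.hconv ρ h k) j)) =
        (∑ j ∈ Finset.range (H.nR k), f (H.hconv ρ h (H.d1 k j)) (H.d2 k j))) := by
  let ρ' : H.LStarDual := ⟨ρ, hρ_add, hρ_lin⟩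
  have hρ' : H.intMapL i ρ' = 1 := hρ
  refine ⟨fun h k m => HopfAlgebroidData.sweedlerR_hconv_mul ρ' h k m,
    HopfAlgebroidData.heta_πR_sR_mul hri,
    HopfAlgebroidData.hconv_assoc hri hnd₁.1 hnd₂.2 hρ',
    HopfAlgebroidData.hconv_heta_right hri hnd₁.1 hnd₂.2 hρ',
    HopfAlgebroidData.hconv_heta_left hri hρ',
    fun M _ f hf₁ hf₂ hf₃ h k => ?_⟩
  have hf : H.IsBalancedR f := ⟨hf₁, hf₂, hf₃⟩
  exact ⟨HopfAlgebroidData.sweedlerR_hconv_left hf ρ' h k,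
    HopfAlgebroidData.sweedlerR_hconv_right hf hri hnd₁.1 hnd₂.2 hρ' h k⟩
end
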